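/- A finite matroid M is binary if and only if its dual matroid M✶ is binary. -/

import Mathlib

/-- `ρ` is a representation of the matroid `M` over the field `K`. -/
def Matroid.IsRep {α : Type*} (M : Matroid α) (K : Type*) [Field K] {V : Type*}
    [AddCommGroup V] [Module K V] (ρ : α → V) : Prop :=
  (∀ S ⊆ M.E, (M.Indep S ↔ Set.InjOn ρ S ∧ LinearIndependent K ((↑) : (ρ '' S) → V))) ∧
    Submodule.span K (ρ '' M.E) = ⊤

/-- `M` is representable over the field `K`. -/
def Matroid.RepresentableOver {α : Type*} (M : Matroid α) (K : Type) [Field K] : Prop :=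
  ∃ (V : Type) (_ : AddCommGroup V) (_ : Module K V) (ρ : α → V), M.IsRep K ρ

/-- A matroid is binary if it admits a representation over `𝔽₂ = ZMod 2`. -/
def Matroid.IsBinary {α : Type*} (M : Matroid α) : Prop :=
  M.RepresentableOver (ZMod 2)

/-!
Let `ρ` represent `M` over `K`. Reduce the standard basis of `K^E` modulo the row space
`{(φ (ρ e))ₑ | φ ∈ V*}` of the matrix with columns `ρ e`. A set `S` of these reduced basis vectors
is independent iff no nonzero linear form vanishes on `ρ (E \ S)` without vanishing on all of
`ρ E`, i.e. iff `ρ (E \ S)` spans `V`, i.e. iff `E \ S` is spanning in `M`. That is exactly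
coindependence of `S`, so these vectors represent `M✶` over the same field; and `M✶✶ = M`.
-/

open Set Submodule Function

theorem linearIndepOn_mkQ_comp_iff_disjoint {R M ι : Type*} [Ring R] [AddCommGroup M] [Module R M]
    {b : ι → M} {s : Set ι} (hb : LinearIndepOn R b s) (W : Submodule R M) :
    LinearIndepOn R (W.mkQ ∘ b) s ↔ Disjoint (span R (b '' s)) W := by
  refine ⟨fun h => ?_, fun h => (W.mkQ.linearIndepOn_iff_of_injOn ?_).2 hb⟩
  · simpa [image_eq_range] using Submodule.range_ker_disjoint (v := fun i : s => b i) h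
  · exact LinearMap.injOn_of_disjoint_ker le_rfl (by rwa [ker_mkQ])

theorem linearIndepOn_image_iff {R M ι ι' : Type*} [Semiring R] [AddCommMonoid M] [Module R M]
    {g : ι' → M} {f : ι → ι'} {s : Set ι} (hf : InjOn f s) :
    LinearIndepOn R g (f '' s) ↔ LinearIndepOn R (g ∘ f) s :=
  ⟨fun h => h.comp_of_image hf, fun h => h.image_of_comp _ _⟩

namespace Module

variable (K : Type*) {V ι : Type*} [Field K] [AddCommGroup V] [Module K V]

/-- The row space of the matrix whose columns are the vectors `v i`. -/
def rowSpace (v : ι → V) : Submodule K (ι → K) :=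
  LinearMap.range (LinearMap.pi fun i => Dual.eval K V (v i))

noncomputable def galeDual [Finite ι] (v : ι → V) : ι → (ι → K) ⧸ rowSpace K v :=
  (rowSpace K v).mkQ ∘ Pi.basisFun K ι

variable {K}

theorem mem_dualAnnihilator_span_image {v : ι → V} {s : Set ι} {φ : Dual K V} :
    φ ∈ (span K (v '' s)).dualAnnihilator ↔ ∀ i ∈ s, φ (v i) = 0 := by
  simp only [mem_dualAnnihilator, ← LinearMap.mem_ker, ← SetLike.le_def, span_le,
    image_subset_iff]
  rfl

theorem span_range_galeDual [Finite ι] (v : ι → V) : span K (range (galeDual K v)) = ⊤ := by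
  rw [galeDual, range_comp, span_image, (Pi.basisFun K ι).span_eq, Submodule.map_top, range_mkQ]

theorem linearIndepOn_galeDual_iff [Finite ι] (v : ι → V) (s : Set ι) :
    LinearIndepOn K (galeDual K v) s ↔ span K (range v) ≤ span K (v '' sᶜ) := by
  rw [galeDual,
    linearIndepOn_mkQ_comp_iff_disjoint ((Pi.basisFun K ι).linearIndependent.linearIndepOn s),
    ← Subspace.dualAnnihilator_le_dualAnnihilator_iff, Submodule.disjoint_def, rowSpace]
  simp only [Basis.mem_span_image, Finsupp.support_subset_iff, Pi.basisFun_repr,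
    LinearMap.mem_range, SetLike.le_def, ← image_univ, mem_dualAnnihilator_span_image,
    funext_iff, LinearMap.pi_apply, Dual.eval_apply, Pi.zero_apply, forall_exists_index,
    mem_compl_iff, mem_univ, forall_const]
  constructor
  · exact fun h φ hφ => h _ hφ φ fun _ => rfl
  · intro h x hx φ hφ i
    rw [← hφ]
    exact h (fun j hj => (hφ j).trans (hx j hj)) i

end Module

namespace Matroid

variable {α K V : Type*} [Field K] [AddCommGroup V] [Module K V] {M : Matroid α} {ρ : α → V}
  {I X : Set α} {e : α}

theorem isRep_iff : M.IsRep K ρ ↔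
    (∀ S ⊆ M.E, M.Indep S ↔ LinearIndepOn K ρ S) ∧ span K (ρ '' M.E) = ⊤ := by
  refine and_congr_left' (forall₂_congr fun S _ => iff_congr Iff.rfl ?_)
  exact ⟨fun ⟨hinj, hli⟩ => (linearIndepOn_iff_image hinj).2 hli, fun h => ⟨h.injOn, h.id_image⟩⟩

namespace IsRep

theorem indep_iff (hρ : M.IsRep K ρ) (hX : X ⊆ M.E) : M.Indep X ↔ LinearIndepOn K ρ X :=
  (isRep_iff.1 hρ).1 X hX

theorem indep_insert_iff (hρ : M.IsRep K ρ) (hI : M.Indep I) (he : e ∈ M.E) :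
    M.Indep (insert e I) ↔ (ρ e ∈ span K (ρ '' I) → e ∈ I) := by
  rw [hρ.indep_iff (insert_subset he hI.subset_ground), linearIndepOn_insert_iff,
    ← hρ.indep_iff hI.subset_ground, and_iff_right hI]

theorem span_image_eq_of_isBasis (hρ : M.IsRep K ρ) (hI : M.IsBasis I X) :
    span K (ρ '' I) = span K (ρ '' X) := by
  refine (span_mono (image_mono hI.subset)).antisymm (span_le.2 ?_)
  rintro _ ⟨e, he, rfl⟩
  by_contra hspan
  have heI : e ∉ I := fun heI => hspan (subset_span (mem_image_of_mem ρ heI))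
  exact (hI.insert_dep ⟨he, heI⟩).not_indep
    ((hρ.indep_insert_iff hI.indep (hI.subset_ground he)).2 fun h => absurd h hspan)

theorem isBase_iff (hρ : M.IsRep K ρ) (hI : M.Indep I) : M.IsBase I ↔ span K (ρ '' I) = ⊤ := by
  refine ⟨fun hB => (hρ.span_image_eq_of_isBasis hB.isBasis_ground).trans hρ.2,
    fun h => hI.isBase_of_forall_insert fun e he hins => he.2 ?_⟩
  exact (hρ.indep_insert_iff hI he.1).1 hins (h ▸ mem_top)

theorem spanning_iff (hρ : M.IsRep K ρ) (hX : X ⊆ M.E) :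
    M.Spanning X ↔ span K (ρ '' X) = ⊤ := by
  obtain ⟨I, hI⟩ := M.exists_isBasis X
  rw [← hI.spanning_iff_spanning, ← hρ.span_image_eq_of_isBasis hI, ← hρ.isBase_iff hI.indep]
  exact ⟨hI.indep.isBase_of_spanning, IsBase.spanning⟩

theorem dual {ι : Type*} [Finite ι] {f : ι → α} (hf : Injective f) (hfE : range f = M.E)
    (hρ : M.IsRep K ρ) : M✶.IsRep K (extend f (Module.galeDual K (ρ ∘ f)) 0) := by
  have hcomp := extend_comp hf (Module.galeDual K (ρ ∘ f)) 0
  have hspan : span K (range (ρ ∘ f)) = ⊤ := by rw [range_comp, hfE, hρ.2]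
  refine isRep_iff.2 ⟨fun S hS => ?_, ?_⟩
  · rw [dual_ground] at hS
    obtain ⟨T, rfl⟩ : ∃ T, f '' T = S := ⟨f ⁻¹' S, image_preimage_eq_of_subset (hfE ▸ hS)⟩
    have hcompl : M.E \ f '' T = f '' Tᶜ := by
      rw [← hfE, ← image_univ, ← image_sdiff hf, compl_eq_univ_sdiff]
    rw [linearIndepOn_image_iff hf.injOn, hcomp, Module.linearIndepOn_galeDual_iff, hspan,
      top_le_iff, image_comp, ← hcompl, ← hρ.spanning_iff sdiff_subset,
      ← coindep_iff_compl_spanning hS, coindep_def]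
  · rw [dual_ground, ← hfE, ← range_comp, hcomp, Module.span_range_galeDual]

end IsRep

theorem RepresentableOver.dual {K : Type} [Field K] [M.Finite] (h : M.RepresentableOver K) :
    M✶.RepresentableOver K := by
  obtain ⟨V, _, _, ρ, hρ⟩ := h
  -- index by `Fin n` rather than `M.E`, so that the Gale dual lives in `Type`
  have := M.ground_finite.to_subtype
  obtain ⟨n, ⟨e⟩⟩ := Finite.exists_equiv_fin M.E
  exact ⟨_, _, _, _, hρ.dual (Subtype.val_injective.comp e.symm.injective) (by simp)⟩

end Matroid

/-- A finite matroid is binary if and only if its dual matroid is binary. -/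
theorem binary_iff_dual_binary {α : Type*} (M : Matroid α) [M.Finite] :
    M.IsBinary ↔ M✶.IsBinary :=
  ⟨Matroid.RepresentableOver.dual, fun h => M.dual_dual ▸ h.dual⟩
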